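/- arXiv:2510.22867 — 2 statements merged into one kernel-verified Lean document; each statement's English description precedes it below -/
import Mathlib

section
/- Let ρ and σ be density matrices on a d-dimensional Hilbert space with (1/2)‖ρ − σ‖₁ ≤ ε ≤ 1 − 1/d. Then |S(ρ) − S(σ)| ≤ ε·log(d − 1) + H₂(ε), where S is the von Neumann entropy and H₂(ε) = −ε log ε − (1−ε) log(1−ε) is the binary entropy. -/
set_option maxHeartbeats 1000000

open scoped Matrix.Norms.L2Operator ComplexOrder
open Matrix

noncomputable section

/-- The trace norm (Schatten 1-norm) `‖A‖₁ = Tr √(Aᴴ A)` of a complex matrix. -/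
def traceNorm {n : Type*} [Fintype n] [DecidableEq n] (A : Matrix n n ℂ) : ℝ :=
  ((((Matrix.posSemidef_conjTranspose_mul_self A).1.eigenvectorUnitary : Matrix n n ℂ) *
      diagonal (((↑) : ℝ → ℂ) ∘ (√·) ∘ (Matrix.posSemidef_conjTranspose_mul_self A).1.eigenvalues) *
      (star (Matrix.posSemidef_conjTranspose_mul_self A).1.eigenvectorUnitary :
        Matrix n n ℂ)).trace).re

/-- A density matrix: positive semidefinite with unit trace. -/
def IsDensityMatrix {n : Type*} [Fintype n] (ρ : Matrix n n ℂ) : Prop :=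
  ρ.PosSemidef ∧ ρ.trace = 1

/-- The von Neumann entropy (base 2) `S(ρ) = −Tr(ρ log₂ ρ)`, computed from the
eigenvalues of a Hermitian matrix. -/
def vnEntropy {n : Type*} [Fintype n] [DecidableEq n] {ρ : Matrix n n ℂ}
    (hρ : ρ.IsHermitian) : ℝ :=
  - ∑ i, hρ.eigenvalues i * Real.logb 2 (hρ.eigenvalues i)

/-- Binary entropy (base 2): `H₂(ε) = −ε log₂ ε − (1−ε) log₂ (1−ε)`. -/
def binEntropy (ε : ℝ) : ℝ :=
  - ε * Real.logb 2 ε - (1 - ε) * Real.logb 2 (1 - ε)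

namespace FA

variable {d : ℕ} {A B C : Matrix (Fin d) (Fin d) ℂ}

def cd (hA : A.IsHermitian) (f : Fin d → ℝ) : Matrix (Fin d) (Fin d) ℂ :=
  (hA.eigenvectorUnitary : Matrix (Fin d) (Fin d) ℂ) * diagonal (Complex.ofReal ∘ f) *
    star (hA.eigenvectorUnitary : Matrix (Fin d) (Fin d) ℂ)

lemma ofReal_comp_mul (f g : Fin d → ℝ) :
    (Complex.ofReal ∘ f) * (Complex.ofReal ∘ g) = Complex.ofReal ∘ (f * g) := by
  ext i; simp

lemma cd_mul (hA : A.IsHermitian) (f g : Fin d → ℝ) : cd hA f * cd hA g = cd hA (f * g) := by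
  unfold cd
  have h2 : ∀ X : Matrix (Fin d) (Fin d) ℂ,
      star (hA.eigenvectorUnitary : Matrix (Fin d) (Fin d) ℂ) *
        ((hA.eigenvectorUnitary : Matrix (Fin d) (Fin d) ℂ) * X) = X := by
    intro X
    rw [← mul_assoc, Unitary.coe_star_mul_self, one_mul]
  simp only [Matrix.mul_assoc, h2]
  rw [← Matrix.mul_assoc (diagonal _), diagonal_mul_diagonal]
  have : (fun i => (Complex.ofReal ∘ f) i * (Complex.ofReal ∘ g) i) = Complex.ofReal ∘ (f * g) := by
    ext i; simp
  rw [this]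

lemma cd_sub (hA : A.IsHermitian) (f g : Fin d → ℝ) : cd hA f - cd hA g = cd hA (f - g) := by
  unfold cd
  rw [← sub_mul, ← mul_sub, diagonal_sub]
  have : (fun i => (Complex.ofReal ∘ f) i - (Complex.ofReal ∘ g) i) = Complex.ofReal ∘ (f - g) := by
    ext i; simp
  rw [this]

lemma cd_trace (hA : A.IsHermitian) (f : Fin d → ℝ) :
    (cd hA f).trace = Complex.ofReal (∑ i, f i) := by
  unfold cd
  rw [trace_mul_cycle, Unitary.coe_star_mul_self, one_mul, trace_diagonal]
  push_cast
  rfl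

lemma cd_posSemidef (hA : A.IsHermitian) {f : Fin d → ℝ} (hf : ∀ i, 0 ≤ f i) :
    (cd hA f).PosSemidef := by
  have h : (diagonal (Complex.ofReal ∘ f)).PosSemidef := by
    refine posSemidef_diagonal_iff.mpr fun i => ?_
    simpa using hf i
  simpa [cd, Matrix.star_eq_conjTranspose, mul_assoc] using
    h.mul_mul_conjTranspose_same (hA.eigenvectorUnitary : Matrix (Fin d) (Fin d) ℂ)

lemma cd_eigenvalues (hA : A.IsHermitian) : cd hA hA.eigenvalues = A := by
  conv_rhs => rw [hA.spectral_theorem, Unitary.conjStarAlgAut_apply]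
  rfl

lemma trace_eq_sum_eigenvalues (hA : A.IsHermitian) :
    A.trace = Complex.ofReal (∑ i, hA.eigenvalues i) := by
  conv_lhs => rw [← cd_eigenvalues hA]
  exact cd_trace hA _



lemma re_inner_toEuclideanLin_nonneg {M : Matrix (Fin d) (Fin d) ℂ} (hM : M.PosSemidef)
    (x : EuclideanSpace ℂ (Fin d)) :
    0 ≤ (inner ℂ x (toEuclideanLin M x) : ℂ).re := by
  rw [EuclideanSpace.inner_eq_star_dotProduct, dotProduct_comm]
  simpa using hM.re_dotProduct_nonneg (WithLp.equiv 2 _ x)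

lemma toEuclideanLin_eigenvector (hA : A.IsHermitian) (i : Fin d) :
    toEuclideanLin A (hA.eigenvectorBasis i) =
      (hA.eigenvalues i : ℂ) • hA.eigenvectorBasis i := by
  rw [toEuclideanLin_apply]
  rw [hA.mulVec_eigenvectorBasis, WithLp.toLp_smul, WithLp.toLp_ofLp,
    RCLike.real_smul_eq_coe_smul (K := ℂ)]
  norm_num

lemma inner_toEuclideanLin_eq (hA : A.IsHermitian) (x : EuclideanSpace ℂ (Fin d)) :
    (inner ℂ x (toEuclideanLin A x) : ℂ) =
      ∑ i, (hA.eigenvalues i : ℂ) * ((‖hA.eigenvectorBasis.repr x i‖ : ℝ) ^ 2 : ℝ) := by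
  set b := hA.eigenvectorBasis with hb
  set c : Fin d → ℂ := fun i => b.repr x i with hc
  have hx : ∑ i, c i • b i = x := b.sum_repr x
  conv_lhs => rw [← hx]
  rw [map_sum]
  have : ∀ i ∈ Finset.univ, toEuclideanLin A (c i • b i)
      = (c i * (hA.eigenvalues i : ℂ)) • b i := by
    intro i _
    rw [LinearMap.map_smul, toEuclideanLin_eigenvector hA i, smul_smul]
  rw [Finset.sum_congr rfl this]
  rw [b.orthonormal.inner_sum c (fun i => c i * (hA.eigenvalues i : ℂ)) Finset.univ]
  refine Finset.sum_congr rfl fun i _ => ?_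
  have h1 : (starRingEnd ℂ) (c i) * c i = (‖c i‖ : ℂ) ^ 2 := by
    rw [RCLike.conj_mul]; norm_cast
  have h2 : (starRingEnd ℂ) (c i) * (c i * (hA.eigenvalues i : ℂ))
      = (starRingEnd ℂ) (c i) * c i * (hA.eigenvalues i : ℂ) := by ring
  rw [h2, h1]
  simp only [hc]
  push_cast
  ring

lemma norm_sq_eq_sum_repr (b : OrthonormalBasis (Fin d) ℂ (EuclideanSpace ℂ (Fin d)))
    (x : EuclideanSpace ℂ (Fin d)) : ‖x‖ ^ 2 = ∑ i, ‖b.repr x i‖ ^ 2 := by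
  rw [← b.repr.norm_map x, EuclideanSpace.norm_eq, Real.sq_sqrt (by positivity)]

lemma re_inner_toEuclideanLin_eq (hA : A.IsHermitian) (x : EuclideanSpace ℂ (Fin d)) :
    (inner ℂ x (toEuclideanLin A x) : ℂ).re =
      ∑ i, hA.eigenvalues i * ‖hA.eigenvectorBasis.repr x i‖ ^ 2 := by
  rw [inner_toEuclideanLin_eq hA x]
  push_cast
  rw [Complex.re_sum]
  refine Finset.sum_congr rfl fun i _ => ?_
  rw [← Complex.ofReal_pow, ← Complex.ofReal_mul, Complex.ofReal_re]

lemma repr_eq_zero_of_mem_span (b : OrthonormalBasis (Fin d) ℂ (EuclideanSpace ℂ (Fin d)))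
    (s : Finset (Fin d)) {x : EuclideanSpace ℂ (Fin d)}
    (hx : x ∈ Submodule.span ℂ (⇑b '' ↑s)) {j : Fin d} (hj : j ∉ s) : b.repr x j = 0 := by
  rw [show ⇑b = ⇑b.toBasis from (b.coe_toBasis).symm] at hx
  have h := b.toBasis.mem_span_image.mp hx
  have h2 : b.toBasis.repr x j = 0 := by
    by_contra h0
    exact hj (h (Finsupp.mem_support_iff.mpr h0))
  rw [← b.coe_toBasis_repr_apply]
  exact h2

lemma finrank_span_orthonormal (b : OrthonormalBasis (Fin d) ℂ (EuclideanSpace ℂ (Fin d)))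
    (s : Finset (Fin d)) :
    Module.finrank ℂ (Submodule.span ℂ (⇑b '' ↑s)) = s.card := by
  have hli : LinearIndependent ℂ (fun i : s => b i) :=
    (b.orthonormal.comp Subtype.val Subtype.val_injective).linearIndependent
  have hr : Set.range (fun i : s => b i) = ⇑b '' ↑s := by
    ext y; constructor
    · rintro ⟨i, rfl⟩; exact ⟨i, i.2, rfl⟩
    · rintro ⟨i, hi, rfl⟩; exact ⟨⟨i, hi⟩, rfl⟩
  rw [← hr, finrank_span_eq_card hli, Fintype.card_coe]

def sortedEig (hA : A.IsHermitian) : Fin d → ℝ := hA.eigenvalues ∘ Tuple.sort hA.eigenvalues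

lemma weyl {A B : Matrix (Fin d) (Fin d) ℂ} (hA : A.IsHermitian) (hB : B.IsHermitian)
    (h : (B - A).PosSemidef) (k : Fin d) : sortedEig hA k ≤ sortedEig hB k := by
  classical
  set πA := Tuple.sort hA.eigenvalues with hπA
  set πB := Tuple.sort hB.eigenvalues with hπB
  set sA : Finset (Fin d) := (Finset.Ici k).image πA with hsA
  set sB : Finset (Fin d) := (Finset.Iic k).image πB with hsB
  set bA := hA.eigenvectorBasis with hbA
  set bB := hB.eigenvectorBasis with hbB
  set V := Submodule.span ℂ (⇑bA '' ↑sA) with hV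
  set W := Submodule.span ℂ (⇑bB '' ↑sB) with hW
  have hVr : Module.finrank ℂ V = d - k := by
    rw [hV, finrank_span_orthonormal, hsA, Finset.card_image_of_injective _ πA.injective,
      Fin.card_Ici]
  have hWr : Module.finrank ℂ W = k + 1 := by
    rw [hW, finrank_span_orthonormal, hsB, Finset.card_image_of_injective _ πB.injective,
      Fin.card_Iic]
  have hsum := Submodule.finrank_sup_add_finrank_inf_eq V W
  have hle : Module.finrank ℂ ↥(V ⊔ W) ≤ d := by
    have := Submodule.finrank_le (V ⊔ W)
    simpa [finrank_euclideanSpace_fin] using this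
  have hk := k.isLt
  have hpos : 0 < Module.finrank ℂ ↥(V ⊓ W) := by omega
  have hnbot : (V ⊓ W) ≠ ⊥ := by
    intro hbot
    rw [hbot, finrank_bot] at hpos
    exact lt_irrefl 0 hpos
  obtain ⟨x, hxVW, hx0⟩ := Submodule.exists_mem_ne_zero_of_ne_bot hnbot
  have hxV : x ∈ V := hxVW.1
  have hxW : x ∈ W := hxVW.2
  have hnx : (0:ℝ) < ‖x‖ ^ 2 := by
    have : ‖x‖ ≠ 0 := fun hh => hx0 (norm_eq_zero.mp hh)
    positivity
  have hAx : sortedEig hA k * ‖x‖ ^ 2 ≤ (inner ℂ x (toEuclideanLin A x) : ℂ).re := by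
    rw [re_inner_toEuclideanLin_eq hA x, norm_sq_eq_sum_repr bA x, Finset.mul_sum]
    refine Finset.sum_le_sum fun j _ => ?_
    by_cases hj : j ∈ sA
    · obtain ⟨i, hi, rfl⟩ := Finset.mem_image.mp hj
      have : sortedEig hA k ≤ hA.eigenvalues (πA i) :=
        Tuple.monotone_sort hA.eigenvalues (Finset.mem_Ici.mp hi)
      exact mul_le_mul_of_nonneg_right this (by positivity)
    · rw [repr_eq_zero_of_mem_span bA sA hxV hj]
      simp
  have hBx : (inner ℂ x (toEuclideanLin B x) : ℂ).re ≤ sortedEig hB k * ‖x‖ ^ 2 := by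
    rw [re_inner_toEuclideanLin_eq hB x, norm_sq_eq_sum_repr bB x, Finset.mul_sum]
    refine Finset.sum_le_sum fun j _ => ?_
    by_cases hj : j ∈ sB
    · obtain ⟨i, hi, rfl⟩ := Finset.mem_image.mp hj
      have : hB.eigenvalues (πB i) ≤ sortedEig hB k :=
        Tuple.monotone_sort hB.eigenvalues (Finset.mem_Iic.mp hi)
      exact mul_le_mul_of_nonneg_right this (by positivity)
    · rw [repr_eq_zero_of_mem_span bB sB hxW hj]
      simp
  have hmid : (inner ℂ x (toEuclideanLin A x) : ℂ).re ≤ (inner ℂ x (toEuclideanLin B x) : ℂ).re := by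
    have h0 := re_inner_toEuclideanLin_nonneg h x
    have hsub : toEuclideanLin (B - A) x = toEuclideanLin B x - toEuclideanLin A x := by
      rw [map_sub]; rfl
    rw [hsub, inner_sub_right, Complex.sub_re] at h0
    linarith
  have hfin := le_trans hAx (le_trans hmid hBx)
  exact le_of_mul_le_mul_right (by linarith) hnx

lemma traceNorm_eq_cfc (A : Matrix (Fin d) (Fin d) ℂ) :
    traceNorm A = ((cfc Real.sqrt (Aᴴ * A)).trace).re := by
  rw [(posSemidef_conjTranspose_mul_self A).1.cfc_eq, IsHermitian.cfc, Unitary.conjStarAlgAut_apply]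
  rfl

lemma traceNorm_hermitian (hC : C.IsHermitian) : traceNorm C = ∑ i, |hC.eigenvalues i| := by
  have habs : (fun x : ℝ => Real.sqrt (x ^ 2)) = fun x => |x| :=
    funext fun x => Real.sqrt_sq_eq_abs x
  have key : cfc (fun x : ℝ => |x|) C = cfc Real.sqrt (C * C) := by
    rw [← habs]; exact (cfc_comp_pow Real.sqrt 2 C (ha := hC)).trans (congrArg _ (sq C))
  rw [traceNorm_eq_cfc, hC.eq, ← key, hC.cfc_eq, IsHermitian.cfc, Unitary.conjStarAlgAut_apply]
  change (cd hC (fun i => |hC.eigenvalues i|)).trace.re = _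
  rw [cd_trace]
  simp

lemma traceNorm_neg (C : Matrix (Fin d) (Fin d) ℂ) : traceNorm (-C) = traceNorm C := by
  have h : (-C)ᴴ * (-C) = Cᴴ * C := by simp
  rw [traceNorm_eq_cfc, traceNorm_eq_cfc, h]

lemma sum_comp_sortedEig (hA : A.IsHermitian) (F : ℝ → ℝ) :
    ∑ i, F (sortedEig hA i) = ∑ i, F (hA.eigenvalues i) :=
  Equiv.sum_comp (Tuple.sort hA.eigenvalues) (fun i => F (hA.eigenvalues i))

lemma mirsky_half {A B : Matrix (Fin d) (Fin d) ℂ} (hA : A.IsHermitian) (hB : B.IsHermitian) :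
    ∑ k, max (sortedEig hA k - sortedEig hB k) 0
      ≤ (traceNorm (A - B) + ((A - B).trace).re) / 2 := by
  have hC : (A - B).IsHermitian := hA.sub hB
  set lam := hC.eigenvalues with hlam
  have hP : (cd hC (fun i => max (lam i) 0)).PosSemidef :=
    cd_posSemidef hC fun i => le_max_right _ _
  have hN : (cd hC (fun i => max (-lam i) 0)).PosSemidef :=
    cd_posSemidef hC fun i => le_max_right _ _
  set P := cd hC (fun i => max (lam i) 0) with hPdef
  set N := cd hC (fun i => max (-lam i) 0) with hNdef
  have hPN : P - N = A - B := by
    rw [hPdef, hNdef, cd_sub]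
    have h1 : (fun i => max (lam i) 0) - (fun i => max (-lam i) 0) = lam := by
      ext i; simp only [Pi.sub_apply]
      rcases le_total (lam i) 0 with h | h
      · rw [max_eq_right h, max_eq_left (by linarith)]; ring
      · rw [max_eq_left h, max_eq_right (by linarith)]; ring
    rw [h1, cd_eigenvalues]
  have hBP : (B + P).IsHermitian := hB.add hP.1
  have h1 : ((B + P) - A).PosSemidef := by
    have : (B + P) - A = N := by
      have : P - N = A - B := hPN
      have := sub_eq_iff_eq_add.mp this
      rw [this]; abel
    rw [this]; exact hN
  have h2 : ((B + P) - B).PosSemidef := by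
    have : (B + P) - B = P := by abel
    rw [this]; exact hP
  have w1 := weyl hA hBP h1
  have w2 := weyl hB hBP h2
  have key : ∑ k, max (sortedEig hA k - sortedEig hB k) 0
      ≤ ∑ k, (sortedEig hBP k - sortedEig hB k) :=
    Finset.sum_le_sum fun k _ => max_le (by linarith [w1 k]) (by linarith [w2 k])
  have sums : ∑ k, (sortedEig hBP k - sortedEig hB k) = (P.trace).re := by
    rw [Finset.sum_sub_distrib]
    have e1 : ∑ i, sortedEig hBP i = ∑ i, hBP.eigenvalues i := sum_comp_sortedEig hBP id
    have e2 : ∑ i, sortedEig hB i = ∑ i, hB.eigenvalues i := sum_comp_sortedEig hB id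
    have t1 := trace_eq_sum_eigenvalues hBP
    have t2 := trace_eq_sum_eigenvalues hB
    have : (B + P).trace = B.trace + P.trace := trace_add B P
    rw [e1, e2]
    have := congrArg Complex.re (t1.symm.trans (this))
    simp only [Complex.ofReal_re, Complex.add_re] at this
    have t2' := congrArg Complex.re t2
    simp only [Complex.ofReal_re] at t2'
    linarith
  have ptr : (P.trace).re = ∑ i, max (lam i) 0 := by
    rw [hPdef, cd_trace]; simp
  have maxid : ∑ i, max (lam i) 0 = ((∑ i, |lam i|) + ∑ i, lam i) / 2 := by
    rw [← Finset.sum_add_distrib, Finset.sum_div]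
    refine Finset.sum_congr rfl fun i _ => ?_
    rcases le_total (lam i) 0 with h | h
    · rw [max_eq_right h, abs_of_nonpos h]; ring
    · rw [max_eq_left h, abs_of_nonneg h]; ring
  have tn := traceNorm_hermitian hC
  have tr := congrArg Complex.re (trace_eq_sum_eigenvalues hC)
  simp only [Complex.ofReal_re] at tr
  calc ∑ k, max (sortedEig hA k - sortedEig hB k) 0
      ≤ ∑ k, (sortedEig hBP k - sortedEig hB k) := key
    _ = (P.trace).re := sums
    _ = (traceNorm (A - B) + ((A - B).trace).re) / 2 := by rw [ptr, maxid, tn, tr]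

lemma mirsky {A B : Matrix (Fin d) (Fin d) ℂ} (hA : A.IsHermitian) (hB : B.IsHermitian) :
    ∑ k, |sortedEig hA k - sortedEig hB k|
      ≤ traceNorm (A - B) + |((A - B).trace).re| := by
  have m1 := mirsky_half hA hB
  have m2 := mirsky_half hB hA
  have hneg : traceNorm (B - A) = traceNorm (A - B) := by
    rw [← neg_sub A B, traceNorm_neg]
  have htr : ((B - A).trace).re = -((A - B).trace).re := by
    rw [← neg_sub A B, trace_neg]; simp
  rw [hneg, htr] at m2
  have split : ∑ k, |sortedEig hA k - sortedEig hB k|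
      = ∑ k, max (sortedEig hA k - sortedEig hB k) 0
        + ∑ k, max (sortedEig hB k - sortedEig hA k) 0 := by
    rw [← Finset.sum_add_distrib]
    refine Finset.sum_congr rfl fun k _ => ?_
    rcases le_total (sortedEig hA k) (sortedEig hB k) with h | h
    · rw [abs_of_nonpos (by linarith), max_eq_right (by linarith), max_eq_left (by linarith)]; ring
    · rw [abs_of_nonneg (by linarith), max_eq_left (by linarith), max_eq_right (by linarith)]; ring
  rw [split]
  have := abs_nonneg (((A - B).trace).re)
  have h1 : ((A - B).trace).re ≤ |((A - B).trace).re| := le_abs_self _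
  have h2 : -((A - B).trace).re ≤ |((A - B).trace).re| := neg_le_abs _
  linarith



lemma neg_mul_log_le {w p : ℝ} (hw : 0 ≤ w) (hwp : w ≤ p) :
    -(w * Real.log p) ≤ Real.negMulLog w := by
  rcases eq_or_lt_of_le hw with rfl | hw0
  · simp
  · have hlog : Real.log w ≤ Real.log p := Real.log_le_log hw0 hwp
    rw [Real.negMulLog]
    nlinarith

lemma gibbs_cell {w r : ℝ} (hw : 0 ≤ w) (hr : 0 ≤ r) (hwr : 0 < w → 0 < r) :
    Real.negMulLog w ≤ -(w * Real.log r) + (r - w) := by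
  rcases eq_or_lt_of_le hw with rfl | hw0
  · simp [hr]
  · have hr0 := hwr hw0
    have hy : 0 < r / w := div_pos hr0 hw0
    have hlog : Real.log (r / w) ≤ r / w - 1 := Real.log_le_sub_one_of_pos hy
    have h2 := mul_le_mul_of_nonneg_left hlog (le_of_lt hw0)
    rw [Real.log_div (ne_of_gt hr0) (ne_of_gt hw0)] at h2
    have hfield : w * (r / w - 1) = r - w := by field_simp
    rw [hfield] at h2
    rw [Real.negMulLog]
    nlinarith

lemma sum_ite_diag (i : Fin d) (f g : Fin d → ℝ) :
    ∑ j, (if i = j then f j else g j) = (∑ j, g j) + (f i - g i) := by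
  have : ∀ j, (if i = j then f j else g j) = g j + (if i = j then f j - g j else 0) := by
    intro j; split <;> ring
  rw [Finset.sum_congr rfl fun j _ => this j, Finset.sum_add_distrib, Finset.sum_ite_eq]
  simp

lemma two_le_of_dist_pos {d : ℕ} (p q : Fin d → ℝ) (hp1 : ∑ i, p i = 1)
    (hq1 : ∑ i, q i = 1) (h : 0 < ∑ i, |p i - q i|) : 2 ≤ d := by
  by_contra hlt
  push_neg at hlt
  interval_cases d
  · simp at hp1
  · rw [Fin.sum_univ_one] at hp1 hq1
    rw [Fin.sum_univ_one, hp1, hq1] at h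
    simp at h

lemma classical_FA_side {d : ℕ} (p q : Fin d → ℝ) (hp0 : ∀ i, 0 ≤ p i) (hq0 : ∀ i, 0 ≤ q i)
    (hp1 : ∑ i, p i = 1) (hq1 : ∑ i, q i = 1) {ε : ℝ}
    (hdist : ∑ i, |p i - q i| ≤ 2 * ε) (hε : ε ≤ 1 - 1 / d) :
    (∑ i, Real.negMulLog (p i)) - ∑ i, Real.negMulLog (q i) ≤ Real.qaryEntropy d ε := by
  classical
  have _dummy : True := trivial
  set t : ℝ := (∑ i, |p i - q i|) / 2 with htdef
  have ht0 : 0 ≤ t := by positivity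
  have htε : t ≤ ε := by simp only [htdef]; linarith
  have hε0 : 0 ≤ ε := le_trans ht0 htε
  have hε1 : ε ≤ 1 := by
    have : (0:ℝ) ≤ 1 / d := by positivity
    linarith
  rcases eq_or_lt_of_le ht0 with h0 | hpos
  · have hzero : ∑ i, |p i - q i| = 0 := by
      simp only [htdef] at h0; linarith
    have hpq : ∀ i, p i = q i := by
      intro i
      have h := (Finset.sum_eq_zero_iff_of_nonneg
        (fun i (_ : i ∈ Finset.univ) => abs_nonneg (p i - q i))).mp hzero i (Finset.mem_univ i)
      have := abs_eq_zero.mp h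
      linarith
    have : (∑ i, Real.negMulLog (p i)) = ∑ i, Real.negMulLog (q i) :=
      Finset.sum_congr rfl fun i _ => by rw [hpq i]
    rw [this, sub_self]
    exact Real.qaryEntropy_nonneg hε0 hε1
  · -- t > 0; first get 2 ≤ d
    have hd2 : 2 ≤ d := by
      refine two_le_of_dist_pos p q hp1 hq1 ?_
      simp only [htdef] at hpos
      linarith
    have hdR : (2:ℝ) ≤ (d:ℝ) := by exact_mod_cast hd2
    have hd1 : (0:ℝ) < (d:ℝ) - 1 := by linarith
    have ht1 : t < 1 := by
      have : (0:ℝ) < 1 / d := by positivity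
      linarith
    -- definitions
    set a : Fin d → ℝ := fun i => max (p i - q i) 0 with hadef
    set b : Fin d → ℝ := fun i => max (q i - p i) 0 with hbdef
    set m : Fin d → ℝ := fun i => min (p i) (q i) with hmdef
    have ha0 : ∀ i, 0 ≤ a i := fun i => le_max_right _ _
    have hb0 : ∀ i, 0 ≤ b i := fun i => le_max_right _ _
    have ham : ∀ i, a i + m i = p i := by
      intro i; simp only [hadef, hmdef]
      rcases le_total (p i) (q i) with h | h
      · rw [max_eq_right (by linarith), min_eq_left h]; ring
      · rw [max_eq_left (by linarith), min_eq_right h]; ring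
    have hbm : ∀ i, b i + m i = q i := by
      intro i; simp only [hbdef, hmdef]
      rcases le_total (p i) (q i) with h | h
      · rw [max_eq_left (by linarith), min_eq_left h]; ring
      · rw [max_eq_right (by linarith), min_eq_right h]; ring
    have habs : ∀ i, a i + b i = |p i - q i| := by
      intro i; simp only [hadef, hbdef]
      rcases le_total (p i) (q i) with h | h
      · rw [max_eq_right (by linarith), max_eq_left (by linarith), abs_of_nonpos (by linarith)]
        ring
      · rw [max_eq_left (by linarith), max_eq_right (by linarith), abs_of_nonneg (by linarith)]
        ring
    have hab0 : ∀ i, a i * b i = 0 := by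
      intro i; simp only [hadef, hbdef]
      rcases le_total (p i) (q i) with h | h
      · rw [max_eq_right (by linarith : p i - q i ≤ 0), zero_mul]
      · rw [max_eq_right (by linarith : q i - p i ≤ 0), mul_zero]
    have hsum_amb : (∑ i, a i) - ∑ i, b i = 0 := by
      rw [← Finset.sum_sub_distrib]
      have : ∀ i, a i - b i = p i - q i := by
        intro i
        have h1 := ham i; have h2 := hbm i
        linarith
      rw [Finset.sum_congr rfl fun i _ => this i, Finset.sum_sub_distrib, hp1, hq1, sub_self]
    have hsum_apb : (∑ i, a i) + ∑ i, b i = 2 * t := by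
      rw [← Finset.sum_add_distrib, Finset.sum_congr rfl fun i _ => habs i, htdef]
      ring
    have hsa : ∑ i, a i = t := by linarith
    have hsb : ∑ i, b i = t := by linarith
    have hsm : ∑ i, m i = 1 - t := by
      have : ∀ i, m i = p i - a i := by intro i; have := ham i; linarith
      rw [Finset.sum_congr rfl fun i _ => this i, Finset.sum_sub_distrib, hp1, hsa]
    set w : Fin d → Fin d → ℝ := fun i j => if i = j then m i else a i * b j / t with hwdef
    have hw0 : ∀ i j, 0 ≤ w i j := by
      intro i j; simp only [hwdef]
      split
      · exact le_min (hp0 i) (hq0 i)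
      · positivity
    have hrow : ∀ i, ∑ j, w i j = p i := by
      intro i
      simp only [hwdef]
      rw [sum_ite_diag i (fun _ => m i) (fun j => a i * b j / t)]
      have h1 : ∑ j, a i * b j / t = a i := by
        rw [← Finset.sum_div, ← Finset.mul_sum, hsb, mul_div_assoc, div_self (ne_of_gt hpos),
          mul_one]
      rw [h1]
      have h2 : a i * b i / t = 0 := by rw [hab0 i]; simp
      rw [h2]
      have := ham i; linarith
    have hcol : ∀ j, ∑ i, w i j = q j := by
      intro j
      simp only [hwdef]
      have hswap : ∀ i, (if i = j then m i else a i * b j / t)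
          = (if j = i then m i else a i * b j / t) := by
        intro i
        by_cases h : i = j
        · subst h; simp
        · rw [if_neg h, if_neg fun hh => h hh.symm]
      rw [Finset.sum_congr rfl fun i _ => hswap i,
        sum_ite_diag j (fun i => m i) (fun i => a i * b j / t)]
      have h1 : ∑ i, a i * b j / t = b j := by
        rw [← Finset.sum_div, ← Finset.sum_mul, hsa, mul_comm, mul_div_assoc,
          div_self (ne_of_gt hpos), mul_one]
      rw [h1]
      have h2 : a j * b j / t = 0 := by rw [hab0 j]; simp
      rw [h2]
      have := hbm j; linarith
    have hww : ∑ i, ∑ j, w i j = 1 := by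
      rw [Finset.sum_congr rfl fun i _ => hrow i, hp1]
    have hwp : ∀ i j, w i j ≤ p i := by
      intro i j
      rw [← hrow i]
      exact Finset.single_le_sum (fun k _ => hw0 i k) (Finset.mem_univ j)
    have hwq : ∀ i j, w i j ≤ q j := by
      intro i j
      rw [← hcol j]
      exact Finset.single_le_sum (fun k _ => hw0 k j) (Finset.mem_univ i)
    -- Step 1 : H(p) ≤ H(w)
    have step1 : (∑ i, Real.negMulLog (p i)) ≤ ∑ i, ∑ j, Real.negMulLog (w i j) := by
      refine Finset.sum_le_sum fun i _ => ?_
      have hexp : Real.negMulLog (p i) = ∑ j, -(w i j * Real.log (p i)) := by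
        have h1 : ∑ j, -(w i j * Real.log (p i)) = -((∑ j, w i j) * Real.log (p i)) := by
          rw [Finset.sum_mul, ← Finset.sum_neg_distrib]
        rw [h1, hrow i, Real.negMulLog]
        ring
      rw [hexp]
      exact Finset.sum_le_sum fun j _ => neg_mul_log_le (hw0 i j) (hwp i j)
    -- model distribution r
    set r : Fin d → Fin d → ℝ :=
      fun i j => if i = j then (1 - t) * q j else t / ((d:ℝ) - 1) * q j with hrdef
    have hr0 : ∀ i j, 0 ≤ r i j := by
      intro i j; simp only [hrdef]
      split
      · nlinarith [hq0 j, ht1]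
      · have := hq0 j; positivity
    have hsr : ∑ i, ∑ j, r i j = 1 := by
      have hrowr : ∀ i, ∑ j, r i j = (1 - t) * q i - t / ((d:ℝ) - 1) * q i
          + t / ((d:ℝ) - 1) := by
        intro i
        simp only [hrdef]
        rw [sum_ite_diag i (fun j => (1 - t) * q j) (fun j => t / ((d:ℝ) - 1) * q j),
          ← Finset.mul_sum, hq1]
        ring
      rw [Finset.sum_congr rfl fun i _ => hrowr i]
      rw [Finset.sum_add_distrib, Finset.sum_sub_distrib, ← Finset.mul_sum, ← Finset.mul_sum,
        hq1, Finset.sum_const, Finset.card_univ, Fintype.card_fin]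
      have : (d:ℝ) ≠ 1 := by linarith
      have : (d:ℝ) - 1 ≠ 0 := sub_ne_zero.mpr this
      have e : ((d:ℝ) - 1)⁻¹ * ((d:ℝ) - 1) = 1 := inv_mul_cancel₀ this
      field_simp
      linear_combination (t * (d:ℝ)) * e
    -- Step 2 : Gibbs
    have step2 : (∑ i, ∑ j, Real.negMulLog (w i j)) ≤ ∑ i, ∑ j, -(w i j * Real.log (r i j)) := by
      have cell : ∀ i j, Real.negMulLog (w i j)
          ≤ -(w i j * Real.log (r i j)) + (r i j - w i j) := by
        intro i j
        refine gibbs_cell (hw0 i j) (hr0 i j) fun hwij => ?_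
        have hqj : 0 < q j := lt_of_lt_of_le hwij (hwq i j)
        simp only [hrdef]
        split
        · nlinarith
        · positivity
      have := Finset.sum_le_sum fun i (_ : i ∈ Finset.univ) =>
        Finset.sum_le_sum fun j (_ : j ∈ Finset.univ) => cell i j
      have hsplit : ∑ i, ∑ j, (-(w i j * Real.log (r i j)) + (r i j - w i j))
          = (∑ i, ∑ j, -(w i j * Real.log (r i j))) + ((∑ i, ∑ j, r i j) - ∑ i, ∑ j, w i j) := by
        rw [← Finset.sum_sub_distrib, ← Finset.sum_add_distrib]
        refine Finset.sum_congr rfl fun i _ => ?_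
        rw [← Finset.sum_sub_distrib, ← Finset.sum_add_distrib]
      rw [hsplit, hsr, hww, sub_self, add_zero] at this
      exact this
    -- Step 3 : compute the cross entropy
    have step3 : (∑ i, ∑ j, -(w i j * Real.log (r i j)))
        = (∑ j, Real.negMulLog (q j)) + (Real.negMulLog t + Real.negMulLog (1 - t))
          + t * Real.log ((d:ℝ) - 1) := by
      have cell : ∀ i j, -(w i j * Real.log (r i j))
          = -(w i j * Real.log (q j))
            + -(w i j * (if i = j then Real.log (1 - t) else Real.log t - Real.log ((d:ℝ) - 1))) := by
        intro i j
        rcases eq_or_lt_of_le (hw0 i j) with h0 | hwij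
        · rw [← h0]; ring
        · have hqj : 0 < q j := lt_of_lt_of_le hwij (hwq i j)
          simp only [hrdef]
          by_cases h : i = j
          · simp only [if_pos h]
            rw [Real.log_mul (ne_of_gt (by linarith : (0:ℝ) < 1 - t)) (ne_of_gt hqj)]
            ring
          · simp only [if_neg h]
            rw [Real.log_mul (ne_of_gt (by positivity : (0:ℝ) < t / ((d:ℝ) - 1))) (ne_of_gt hqj),
              Real.log_div (ne_of_gt hpos) (ne_of_gt hd1)]
            ring
      rw [Finset.sum_congr rfl fun i _ => Finset.sum_congr rfl fun j _ => cell i j]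
      have hsplit : ∀ i, ∑ j, (-(w i j * Real.log (q j))
          + -(w i j * (if i = j then Real.log (1 - t) else Real.log t - Real.log ((d:ℝ) - 1))))
          = (∑ j, -(w i j * Real.log (q j)))
            + ∑ j, -(w i j * (if i = j then Real.log (1 - t)
                else Real.log t - Real.log ((d:ℝ) - 1))) := by
        intro i; rw [← Finset.sum_add_distrib]
      rw [Finset.sum_congr rfl fun i _ => hsplit i, Finset.sum_add_distrib]
      have hS1 : (∑ i, ∑ j, -(w i j * Real.log (q j))) = ∑ j, Real.negMulLog (q j) := by
        rw [Finset.sum_comm]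
        refine Finset.sum_congr rfl fun j _ => ?_
        have h1 : ∑ i, -(w i j * Real.log (q j)) = -((∑ i, w i j) * Real.log (q j)) := by
          rw [Finset.sum_mul, ← Finset.sum_neg_distrib]
        rw [h1, hcol j, Real.negMulLog]
        ring
      have hS2 : (∑ i, ∑ j, -(w i j * (if i = j then Real.log (1 - t)
            else Real.log t - Real.log ((d:ℝ) - 1))))
          = -((1 - t) * Real.log (1 - t)) - t * (Real.log t - Real.log ((d:ℝ) - 1)) := by
        set L1 := Real.log (1 - t) with hL1
        set L2 := Real.log t - Real.log ((d:ℝ) - 1) with hL2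
        have percell : ∀ i j, -(w i j * (if i = j then L1 else L2))
            = -(w i j * L2) + (if i = j then -(w i j * (L1 - L2)) else 0) := by
          intro i j; by_cases h : i = j <;> simp [h] <;> ring
        rw [Finset.sum_congr rfl fun i _ => Finset.sum_congr rfl fun j _ => percell i j]
        have hsplit2 : ∀ i, ∑ j, (-(w i j * L2) + (if i = j then -(w i j * (L1 - L2)) else 0))
            = (∑ j, -(w i j * L2)) + ∑ j, (if i = j then -(w i j * (L1 - L2)) else 0) := by
          intro i; rw [← Finset.sum_add_distrib]
        rw [Finset.sum_congr rfl fun i _ => hsplit2 i, Finset.sum_add_distrib]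
        have hA : (∑ i, ∑ j, -(w i j * L2)) = -(1 * L2) := by
          rw [← hww, Finset.sum_mul, ← Finset.sum_neg_distrib]
          refine Finset.sum_congr rfl fun i _ => ?_
          rw [Finset.sum_mul, ← Finset.sum_neg_distrib]
        have hB : (∑ i, ∑ j, (if i = j then -(w i j * (L1 - L2)) else 0))
            = -((1 - t) * (L1 - L2)) := by
          have hinner : ∀ i, (∑ j, (if i = j then -(w i j * (L1 - L2)) else 0))
              = -(m i * (L1 - L2)) := by
            intro i
            rw [Finset.sum_ite_eq]
            simp only [Finset.mem_univ, if_true]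
            congr 1
            simp only [hwdef, if_pos rfl]
          rw [Finset.sum_congr rfl fun i _ => hinner i, Finset.sum_neg_distrib,
            ← Finset.sum_mul, hsm]
        rw [hA, hB]
        ring
      rw [hS1, hS2, Real.negMulLog, Real.negMulLog]
      ring
    -- assemble
    have key : (∑ i, Real.negMulLog (p i)) - ∑ i, Real.negMulLog (q i)
        ≤ Real.qaryEntropy d t := by
      have hq' := Real.binEntropy_eq_negMulLog_add_negMulLog_one_sub t
      have hcast : ((d:ℤ) - 1 : ℤ) = ((d:ℝ) - 1 : ℝ) → True := fun _ => trivial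
      have : Real.qaryEntropy d t = t * Real.log ((d:ℝ) - 1)
          + (Real.negMulLog t + Real.negMulLog (1 - t)) := by
        rw [Real.qaryEntropy, hq']
        norm_num
      rw [this]
      have := le_trans step1 (le_trans step2 (le_of_eq step3))
      linarith
    have mono : Real.qaryEntropy d t ≤ Real.qaryEntropy d ε := by
      rcases eq_or_lt_of_le htε with rfl | hlt
      · exact le_refl _
      · have hmem1 : t ∈ Set.Icc (0:ℝ) (1 - 1/d) := ⟨ht0, by linarith⟩
        have hmem2 : ε ∈ Set.Icc (0:ℝ) (1 - 1/d) := ⟨hε0, hε⟩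
        exact le_of_lt (Real.qaryEntropy_strictMonoOn hd2 hmem1 hmem2 hlt)
    exact le_trans key mono

lemma classical_FA {d : ℕ} (p q : Fin d → ℝ) (hp0 : ∀ i, 0 ≤ p i) (hq0 : ∀ i, 0 ≤ q i)
    (hp1 : ∑ i, p i = 1) (hq1 : ∑ i, q i = 1) {ε : ℝ}
    (hdist : ∑ i, |p i - q i| ≤ 2 * ε) (hε : ε ≤ 1 - 1 / d) :
    |(∑ i, Real.negMulLog (p i)) - ∑ i, Real.negMulLog (q i)| ≤ Real.qaryEntropy d ε := by
  rw [abs_sub_le_iff]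
  constructor
  · exact classical_FA_side p q hp0 hq0 hp1 hq1 hdist hε
  · have hdist' : ∑ i, |q i - p i| ≤ 2 * ε := by
      have : ∀ i, |q i - p i| = |p i - q i| := fun i => abs_sub_comm _ _
      rw [Finset.sum_congr rfl fun i _ => this i]
      exact hdist
    exact classical_FA_side q p hq0 hp0 hq1 hp1 hdist' hε


lemma vnEntropy_eq {d : ℕ} {M : Matrix (Fin d) (Fin d) ℂ} (hM : M.IsHermitian) :
    vnEntropy hM = (∑ i, Real.negMulLog (hM.eigenvalues i)) / Real.log 2 := by
  rw [vnEntropy, Finset.sum_div, ← Finset.sum_neg_distrib]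
  refine Finset.sum_congr rfl fun i _ => ?_
  rw [Real.negMulLog, Real.logb]
  ring

end FA

/-- Fannes–Audenaert continuity bound: if `(1/2)‖ρ − σ‖₁ ≤ ε ≤ 1 − 1/d` for density
matrices on a `d`-dimensional space, then `|S(ρ) − S(σ)| ≤ ε log₂(d−1) + H₂(ε)`. -/
theorem fannes_audenaert {d : ℕ} (hd : 0 < d)
    (ρ σ : Matrix (Fin d) (Fin d) ℂ)
    (hρ : IsDensityMatrix ρ) (hσ : IsDensityMatrix σ) (ε : ℝ)
    (hle : (1 / 2 : ℝ) * traceNorm (ρ - σ) ≤ ε) (hε : ε ≤ 1 - 1 / d) :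
    |vnEntropy hρ.1.1 - vnEntropy hσ.1.1| ≤ ε * Real.logb 2 (d - 1) + binEntropy ε := by
  classical
  set p : Fin d → ℝ := FA.sortedEig hρ.1.1 with hpdef
  set q : Fin d → ℝ := FA.sortedEig hσ.1.1 with hqdef
  have hp0 : ∀ k, 0 ≤ p k := fun k => hρ.1.eigenvalues_nonneg _
  have hq0 : ∀ k, 0 ≤ q k := fun k => hσ.1.eigenvalues_nonneg _
  have hsum_eig_ρ : ∑ i, hρ.1.1.eigenvalues i = 1 := by
    have h := (FA.trace_eq_sum_eigenvalues hρ.1.1).symm.trans hρ.2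
    exact_mod_cast h
  have hsum_eig_σ : ∑ i, hσ.1.1.eigenvalues i = 1 := by
    have h := (FA.trace_eq_sum_eigenvalues hσ.1.1).symm.trans hσ.2
    exact_mod_cast h
  have hp1 : ∑ k, p k = 1 := by
    have := FA.sum_comp_sortedEig hρ.1.1 id
    simpa using this.trans hsum_eig_ρ
  have hq1 : ∑ k, q k = 1 := by
    have := FA.sum_comp_sortedEig hσ.1.1 id
    simpa using this.trans hsum_eig_σ
  have htr0 : ((ρ - σ).trace).re = 0 := by
    rw [trace_sub, hρ.2, hσ.2]
    simp
  have hdist : ∑ k, |p k - q k| ≤ 2 * ε := by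
    have h := FA.mirsky hρ.1.1 hσ.1.1
    rw [htr0] at h
    simp only [abs_zero, add_zero] at h
    linarith
  have hcl := FA.classical_FA p q hp0 hq0 hp1 hq1 hdist hε
  have hvρ : vnEntropy hρ.1.1 = (∑ k, Real.negMulLog (p k)) / Real.log 2 := by
    rw [FA.vnEntropy_eq hρ.1.1]
    congr 1
    exact (FA.sum_comp_sortedEig hρ.1.1 Real.negMulLog).symm
  have hvσ : vnEntropy hσ.1.1 = (∑ k, Real.negMulLog (q k)) / Real.log 2 := by
    rw [FA.vnEntropy_eq hσ.1.1]
    congr 1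
    exact (FA.sum_comp_sortedEig hσ.1.1 Real.negMulLog).symm
  have hrhs : ε * Real.logb 2 ((d:ℝ) - 1) + binEntropy ε
      = Real.qaryEntropy d ε / Real.log 2 := by
    simp only [binEntropy, Real.qaryEntropy, Real.binEntropy, Real.logb, Real.log_inv]
    push_cast
    ring
  have hL : 0 < Real.log 2 := Real.log_pos one_lt_two
  rw [hvρ, hvσ, hrhs, div_sub_div_same, abs_div, abs_of_pos hL]
  exact (div_le_div_iff_of_pos_right hL).mpr hcl

end
end

section
/- Let H = Σ_j P_j be a commuting-projector Hamiltonian (all P_j pairwise commuting projectors), with ground-space projector Π = Π_j (1 − P_j). Assume local indistinguishability: for every operator O supported on region A, Π O Π = c_O Π for a scalar c_O. Let O₁ be supported on a region A and O₂ on a region C, and suppose no P_j acts nontrivially on both supp(O₁) and supp(O₂) (i.e., every P_j commutes with O₁ or with O₂). Then for any state ρ with Πρ = ρ, Tr(ρ O₁ O₂) = Tr(ρ O₁)·Tr(ρ O₂). -/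
open scoped Matrix.Norms.L2Operator ComplexOrder
open Matrix

noncomputable section

private lemma noncommProd_idem' {ι R : Type*} [Monoid R] (s : Finset ι) (f : ι → R)
    (hc : ∀ j k, Commute (f j) (f k)) (hi : ∀ j, f j * f j = f j) :
    s.noncommProd f (Pairwise.set_pairwise (fun a b _ => hc a b) _) *
      s.noncommProd f (Pairwise.set_pairwise (fun a b _ => hc a b) _) =
      s.noncommProd f (Pairwise.set_pairwise (fun a b _ => hc a b) _) := by
  classical
  induction s using Finset.induction_on with
  | empty => simp
  | @insert a s ha ih =>
    rw [Finset.noncommProd_insert_of_notMem _ _ _ _ ha]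
    set p := s.noncommProd f (Pairwise.set_pairwise (fun a b _ => hc a b) _) with hp
    have hcp : Commute (f a) p :=
      Finset.noncommProd_commute _ _ _ _ (fun x _ => hc a x)
    calc f a * p * (f a * p)
        = f a * (p * f a) * p := by simp [mul_assoc]
      _ = f a * f a * (p * p) := by rw [← hcp.eq]; simp [mul_assoc]
      _ = f a * p := by rw [hi a, ih]

private lemma noncommProd_isHermitian' {ι n : Type*} [Fintype n] [DecidableEq n]
    (s : Finset ι) (f : ι → Matrix n n ℂ)
    (hc : ∀ j k, Commute (f j) (f k)) (hh : ∀ j, (f j).IsHermitian) :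
    (s.noncommProd f (Pairwise.set_pairwise (fun a b _ => hc a b) _)).IsHermitian := by
  classical
  induction s using Finset.induction_on with
  | empty => simp only [Finset.noncommProd_empty]; exact isHermitian_one
  | @insert a s ha ih =>
    rw [Finset.noncommProd_insert_of_notMem _ _ _ _ ha]
    set p := s.noncommProd f (Pairwise.set_pairwise (fun a b _ => hc a b) _) with hp
    have hcp : Commute (f a) p :=
      Finset.noncommProd_commute _ _ _ _ (fun x _ => hc a x)
    show (f a * p)ᴴ = f a * p
    rw [conjTranspose_mul, ih, hh a]
    exact hcp.eq.symm

/-- Factorization of ground-space correlations for commuting-projector models.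
`Π = ∏ⱼ (1 − Pⱼ)` is the ground-space projector; local indistinguishability is
assumed for the two observables `O₁`, `O₂`, and every `Pⱼ` commutes with `O₁` or
with `O₂`. Then for any state `ρ` supported in the ground space,
`Tr(ρ O₁ O₂) = Tr(ρ O₁) Tr(ρ O₂)`. -/
theorem ground_space_correlations_factorize
    {n : Type*} [Fintype n] [DecidableEq n] {m : ℕ}
    (P : Fin m → Matrix n n ℂ)
    (hproj : ∀ j, P j * P j = P j)
    (hherm : ∀ j, (P j).IsHermitian)
    (hcomm : ∀ j k, Commute (P j) (P k))
    (Pgs : Matrix n n ℂ)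
    (hPgs : Pgs = (List.ofFn fun j => (1 : Matrix n n ℂ) - P j).prod)
    (O₁ O₂ : Matrix n n ℂ)
    (hLI₁ : ∃ c₁ : ℂ, Pgs * O₁ * Pgs = c₁ • Pgs)
    (hLI₂ : ∃ c₂ : ℂ, Pgs * O₂ * Pgs = c₂ • Pgs)
    (hsupp : ∀ j, Commute (P j) O₁ ∨ Commute (P j) O₂)
    (ρ : Matrix n n ℂ) (hρ : ρ.PosSemidef) (htr : ρ.trace = 1)
    (hground : Pgs * ρ = ρ) :
    (ρ * (O₁ * O₂)).trace = (ρ * O₁).trace * (ρ * O₂).trace := by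
  classical
  obtain ⟨c₁, hc₁⟩ := hLI₁
  obtain ⟨c₂, hc₂⟩ := hLI₂
  set Q : Fin m → Matrix n n ℂ := fun j => 1 - P j with hQ
  have hQcomm : ∀ j k, Commute (Q j) (Q k) := by
    intro j k
    have h1 : Commute (1 - P j) (P k) := (Commute.one_left _).sub_left (hcomm j k)
    exact (Commute.one_right _).sub_right h1
  have hQidem : ∀ j, Q j * Q j = Q j := by
    intro j
    have h := hproj j
    simp only [hQ, sub_mul, mul_sub, one_mul, mul_one, h]
    abel
  have hQherm : ∀ j, (Q j).IsHermitian := fun j => isHermitian_one.sub (hherm j)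
  set S : Finset (Fin m) := Finset.univ.filter (fun j => Commute (P j) O₁) with hS
  set Pi1 : Matrix n n ℂ := S.noncommProd Q (Pairwise.set_pairwise (fun a b _ => hQcomm a b) _) with hPi1def
  set Pi2 : Matrix n n ℂ := Sᶜ.noncommProd Q (Pairwise.set_pairwise (fun a b _ => hQcomm a b) _) with hPi2def
  -- Pgs = Pi1 * Pi2
  have huniv : S ∪ Sᶜ = (Finset.univ : Finset (Fin m)) := Finset.union_compl S
  have hsplit : Pgs = Pi1 * Pi2 := by
    have h2 : (Finset.univ : Finset (Fin m)).noncommProd Q (Pairwise.set_pairwise (fun a b _ => hQcomm a b) _)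
        = Pi1 * Pi2 := by
      rw [← huniv, Finset.noncommProd_union_of_disjoint disjoint_compl_right]
    have h3 : (Finset.univ : Finset (Fin m)).noncommProd Q (Pairwise.set_pairwise (fun a b _ => hQcomm a b) _)
        = (List.ofFn Q).prod := by
      rw [← List.toFinset_finRange m,
        Finset.noncommProd_toFinset _ _ _ (List.nodup_finRange m), ← List.ofFn_eq_map]
    rw [hPgs, ← h3, h2]
  have hPi1idem : Pi1 * Pi1 = Pi1 := noncommProd_idem' S Q hQcomm hQidem
  have hPi2idem : Pi2 * Pi2 = Pi2 := noncommProd_idem' Sᶜ Q hQcomm hQidem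
  have hPi1₂ : Commute Pi1 Pi2 :=
    (Finset.noncommProd_commute _ _ _ _ (fun x _ =>
      (Finset.noncommProd_commute _ _ _ _ (fun y _ => hQcomm x y)).symm))
  have hO₁Pi1 : Commute O₁ Pi1 := by
    apply Finset.noncommProd_commute
    intro x hx
    have hx' : Commute (P x) O₁ := (Finset.mem_filter.mp hx).2
    exact (Commute.one_right O₁).sub_right hx'.symm
  have hO₂Pi2 : Commute O₂ Pi2 := by
    apply Finset.noncommProd_commute
    intro x hx
    have hx' : ¬ Commute (P x) O₁ := by
      simpa [hS] using (Finset.mem_compl.mp hx)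
    have hx'' : Commute (P x) O₂ := (hsupp x).resolve_left hx'
    exact (Commute.one_right O₂).sub_right hx''.symm
  -- basic projector identities
  have hPgsPi1 : Pgs * Pi1 = Pgs := by
    rw [hsplit, mul_assoc, ← hPi1₂.eq, ← mul_assoc, hPi1idem]
  have hPi2Pgs : Pi2 * Pgs = Pgs := by
    rw [hsplit, ← mul_assoc, hPi1₂.eq.symm, mul_assoc, hPi2idem]
  have hidem : Pgs * Pgs = Pgs := by
    rw [hsplit, ← mul_assoc, mul_assoc Pi1 Pi2 Pi1, ← hPi1₂.eq, ← mul_assoc,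
      hPi1idem, mul_assoc, hPi2idem]
  have hherm' : Pgsᴴ = Pgs := by
    have h1 : Pi1ᴴ = Pi1 := noncommProd_isHermitian' S Q hQcomm hQherm
    have h2 : Pi2ᴴ = Pi2 := noncommProd_isHermitian' Sᶜ Q hQcomm hQherm
    rw [hsplit, conjTranspose_mul, h1, h2, hPi1₂.eq]
  -- steps for the key identity
  have hstep1 : Pgs * O₁ * Pi1 = Pgs * O₁ := by
    rw [mul_assoc, hO₁Pi1.eq, ← mul_assoc, hPgsPi1]
  have hstep2 : Pi2 * (O₂ * Pgs) = O₂ * Pgs := by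
    rw [← mul_assoc, ← hO₂Pi2.eq, mul_assoc, hPi2Pgs]
  have hkey : Pgs * (O₁ * O₂) * Pgs = (c₁ * c₂) • Pgs := by
    calc Pgs * (O₁ * O₂) * Pgs
        = (Pgs * O₁) * (O₂ * Pgs) := by simp [mul_assoc]
      _ = (Pgs * O₁ * Pi1) * (Pi2 * (O₂ * Pgs)) := by rw [hstep1, hstep2]
      _ = (Pgs * O₁) * (Pi1 * Pi2) * (O₂ * Pgs) := by simp [mul_assoc]
      _ = (Pgs * O₁ * Pgs) * (O₂ * Pgs) := by rw [← hsplit]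
      _ = (c₁ • Pgs) * (O₂ * Pgs) := by rw [hc₁]
      _ = c₁ • (Pgs * O₂ * Pgs) := by simp [Matrix.smul_mul, mul_assoc]
      _ = (c₁ * c₂) • Pgs := by rw [hc₂, smul_smul]
  -- state facts
  have hrhoP : ρ * Pgs = ρ := by
    have : (Pgs * ρ)ᴴ = ρᴴ := by rw [hground]
    rw [conjTranspose_mul, hherm', hρ.1.eq] at this
    exact this
  have hgen : ∀ (X : Matrix n n ℂ) (c : ℂ), Pgs * X * Pgs = c • Pgs → (ρ * X).trace = c := by
    intro X c hX
    have e : ρ * (Pgs * X * Pgs) = ρ * X * Pgs := by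
      simp only [← mul_assoc, hrhoP]
    calc (ρ * X).trace = (Pgs * (ρ * X)).trace := by rw [← mul_assoc, hground]
      _ = ((ρ * X) * Pgs).trace := trace_mul_comm _ _
      _ = (ρ * (Pgs * X * Pgs)).trace := by rw [e]
      _ = (ρ * (c • Pgs)).trace := by rw [hX]
      _ = c * (ρ * Pgs).trace := by simp [Matrix.mul_smul, smul_eq_mul]
      _ = c := by rw [hrhoP, htr, mul_one]
  rw [hgen (O₁ * O₂) (c₁ * c₂) hkey, hgen O₁ c₁ hc₁, hgen O₂ c₂ hc₂]

end
end
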